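/- Let K be an algebraically closed field of characteristic zero, n, r ≥ 1, and let σ be a regular action of T_r = (K^×)^r on F_n = FreeAlgebra K (Fin n) with negative roots: there are integers k_{ij} ≤ −1 (1 ≤ i ≤ n, 1 ≤ j ≤ r) such that for every t and i, the element σ(t)(z_i) − (∏_j t_j^{k_{ij}}) • z_i has all of its homogeneous components in degrees ≥ 2. Then σ is linearizable. -/

import Mathlib

open FreeAlgebra

/-- A torus action `σ` of `(Kˣ)^r` on the free algebra is *regular* if the image of each
generator depends on `t` as a Laurent polynomial with coefficients in the free algebra. -/
def TorusActionIsRegular {K : Type} [Field K] {n r : ℕ}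
    (σ : (Fin r → Kˣ) →* (FreeAlgebra K (Fin n) ≃ₐ[K] FreeAlgebra K (Fin n))) : Prop :=
  ∀ i : Fin n, ∃ a : ((Fin r → ℤ) →₀ FreeAlgebra K (Fin n)),
    ∀ t : Fin r → Kˣ,
      σ t (ι K i) = a.sum fun m c => ((∏ j : Fin r, (t j) ^ (m j) : Kˣ) : K) • c

/-- A torus action on the free algebra is *linearizable* if some algebra automorphism `β`
conjugates it into an action mapping each generator into the linear span of the generators. -/
def TorusActionIsLinearizable {K : Type} [Field K] {n r : ℕ}
    (σ : (Fin r → Kˣ) →* (FreeAlgebra K (Fin n) ≃ₐ[K] FreeAlgebra K (Fin n))) : Prop :=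
  ∃ β : FreeAlgebra K (Fin n) ≃ₐ[K] FreeAlgebra K (Fin n),
    ∀ (t : Fin r → Kˣ) (i : Fin n),
      β.symm (σ t (β (ι K i))) ∈
        Submodule.span K (Set.range (ι K : Fin n → FreeAlgebra K (Fin n)))

/-- The submodule of the free algebra consisting of the elements all of whose homogeneous
components (in the standard grading where each generator has degree 1) have degree at least 2. -/
def FreeAlgebra.higherDegree (K : Type) [Field K] (n : ℕ) :
    Submodule K (FreeAlgebra K (Fin n)) :=
  ⨆ k : {k : ℕ // 2 ≤ k},
    Submodule.span K (Set.range (ι K : Fin n → FreeAlgebra K (Fin n))) ^ (k : ℕ)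


/-!
Write `χₘ(t) = ∏ⱼ tⱼ ^ mⱼ`. In the expansion `σ t (ι i) = ∑ₘ χₘ(t) • a i m` the characters `χₘ`
are linearly independent, so each `a i m` is a weight vector of weight `m`, and comparing with
the hypothesis modulo degree `≥ 2` gives `a i (k i) ≡ ι i`. The substitution `β = lift w` with
`w i = a i (k i)` then satisfies `σ t ∘ β = β ∘ diag(χ_{k i}(t))`, so it linearizes `σ` once it
is bijective. It is injective because it is the identity to first order. It is surjective
because `σ t` agrees with the diagonal action on the lowest-degree part of a weight vector of
weight `m`, so that part only involves words of weight `m`; since all roots are negative such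
words have length at most `-mⱼ`, and the lowest-degree part can be peeled off with `β` finitely
many times.
-/

section TorusCharacter

variable {K : Type*} [Field K] {r : ℕ}

def torusCharacter (m : Fin r → ℤ) : (Fin r → Kˣ) →* K where
  toFun t := ((∏ j, t j ^ m j : Kˣ) : K)
  map_one' := by simp
  map_mul' s t := by simp [mul_zpow, Finset.prod_mul_distrib]

theorem torusCharacter_apply (m : Fin r → ℤ) (t : Fin r → Kˣ) :
    torusCharacter m t = ((∏ j, t j ^ m j : Kˣ) : K) := rfl

theorem torusCharacter_zero (t : Fin r → Kˣ) : torusCharacter (0 : Fin r → ℤ) t = 1 := by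
  simp [torusCharacter_apply]

theorem torusCharacter_add (m m' : Fin r → ℤ) (t : Fin r → Kˣ) :
    torusCharacter (m + m') t = torusCharacter m t * torusCharacter m' t := by
  simp [torusCharacter_apply, zpow_add, Finset.prod_mul_distrib]

theorem torusCharacter_mulSingle (m : Fin r → ℤ) (j : Fin r) (u : Kˣ) :
    torusCharacter m (Pi.mulSingle j u) = ((u ^ m j : Kˣ) : K) := by
  rw [torusCharacter_apply, Fintype.prod_eq_single j fun j' hj' => by simp [hj']]
  simp

theorem torusCharacter_injective [CharZero K] :
    Function.Injective (torusCharacter : (Fin r → ℤ) → (Fin r → Kˣ) →* K) := by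
  intro m m' h
  funext j
  have h2 := DFunLike.congr_fun h (Pi.mulSingle j (Units.mk0 (2 : K) two_ne_zero))
  simp only [torusCharacter_mulSingle, Units.val_zpow_eq_zpow_val, Units.val_mk0] at h2
  refine zpow_right_injective₀ (a := (2 : ℚ)) two_pos (by norm_num) ?_
  exact Rat.cast_injective (α := K) (by push_cast; exact h2)

theorem linearIndependent_torusCharacter [CharZero K] :
    LinearIndependent K fun m : Fin r → ℤ => ⇑(torusCharacter (K := K) m) :=
  (linearIndependent_monoidHom _ K).comp _ torusCharacter_injective

theorem eq_zero_of_forall_sum_torusCharacter_smul_eq_zero [CharZero K] {Q : Type*}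
    [AddCommGroup Q] [Module K Q] (s : Finset (Fin r → ℤ)) (f : (Fin r → ℤ) → Q)
    (h : ∀ t : Fin r → Kˣ, ∑ m ∈ s, torusCharacter m t • f m = 0)
    {m : Fin r → ℤ} (hm : m ∈ s) : f m = 0 := by
  refine (Module.forall_dual_apply_eq_zero_iff K (f m)).1 fun φ => ?_
  refine linearIndependent_iff'.1 (linearIndependent_torusCharacter (K := K)) s
    (fun m => φ (f m)) ?_ m hm
  funext t
  simpa [mul_comm] using congrArg φ (h t)

end TorusCharacter

section TorusAction

variable {K : Type*} [Field K] {r : ℕ} {A : Type*} [Ring A] [Algebra K A]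

def IsWeightVector (σ : (Fin r → Kˣ) →* (A ≃ₐ[K] A)) (m : Fin r → ℤ) (v : A) : Prop :=
  ∀ t, σ t v = torusCharacter m t • v

variable {σ : (Fin r → Kˣ) →* (A ≃ₐ[K] A)} {x : A} {a : (Fin r → ℤ) →₀ A}

theorem eq_sum_of_forall_apply_eq_laurent
    (ha : ∀ t, σ t x = a.sum fun m c => torusCharacter m t • c) : x = a.sum fun _ c => c := by
  simpa using ha 1

theorem isWeightVector_of_forall_apply_eq_laurent [CharZero K]
    (ha : ∀ t, σ t x = a.sum fun m c => torusCharacter m t • c) (m : Fin r → ℤ) :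
    IsWeightVector σ m (a m) := by
  intro s
  by_cases hm : m ∈ a.support
  swap
  · simp [Finsupp.notMem_support_iff.1 hm]
  refine sub_eq_zero.1 (eq_zero_of_forall_sum_torusCharacter_smul_eq_zero (K := K) a.support
    (fun m => σ s (a m) - torusCharacter m s • a m) (fun t => ?_) hm)
  have hst : σ s (σ t x) = σ (s * t) x := by rw [map_mul]; rfl
  rw [ha, ha, map_finsuppSum, Finsupp.sum, Finsupp.sum] at hst
  simp only [map_smul, map_mul, mul_smul] at hst
  simp only [smul_sub, Finset.sum_sub_distrib, hst, smul_comm (torusCharacter _ t), sub_self]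

theorem sub_mem_of_forall_apply_eq_laurent [CharZero K] (I : Submodule K A) {m : Fin r → ℤ}
    (ha : ∀ t, σ t x = a.sum fun m c => torusCharacter m t • c)
    (hx : ∀ t, σ t x - torusCharacter m t • x ∈ I) : a m - x ∈ I := by
  classical
  let f m' : A ⧸ I := I.mkQ (a m') - if m' = m then I.mkQ x else 0
  have hf (t : Fin r → Kˣ) : ∑ m' ∈ insert m a.support, torusCharacter m' t • f m' = 0 := by
    have h : I.mkQ (σ t x - torusCharacter m t • x) = 0 :=
      (Submodule.Quotient.mk_eq_zero I).2 (hx t)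
    rw [ha, Finsupp.sum_of_support_subset a (Finset.subset_insert m _) _
      (fun _ _ => smul_zero _), map_sub, map_sum] at h
    simpa [f, smul_sub, Finset.sum_sub_distrib, smul_ite] using h
  simpa [f, sub_eq_zero, Submodule.Quotient.eq] using
    eq_zero_of_forall_sum_torusCharacter_smul_eq_zero _ f hf (Finset.mem_insert_self _ _)

end TorusAction

namespace FreeAlgebra

section DegreeFiltration

variable (R : Type*) [CommRing R] {X : Type*}

theorem basisFreeMonoid_apply (u : FreeMonoid X) :
    basisFreeMonoid R X u = FreeMonoid.lift (ι R) u := by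
  simp [basisFreeMonoid, equivMonoidAlgebraFreeMonoid, MonoidAlgebra.coeffLinearEquiv]

@[simp]
theorem basisFreeMonoid_one : basisFreeMonoid R X 1 = 1 := by
  simp [basisFreeMonoid_apply]

@[simp]
theorem basisFreeMonoid_of (x : X) : basisFreeMonoid R X (FreeMonoid.of x) = ι R x := by
  simp [basisFreeMonoid_apply]

theorem basisFreeMonoid_mul (u v : FreeMonoid X) :
    basisFreeMonoid R X (u * v) = basisFreeMonoid R X u * basisFreeMonoid R X v := by
  simp [basisFreeMonoid_apply]

def degreeAtLeast (e : ℕ) : Submodule R (FreeAlgebra R X) :=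
  Submodule.span R (basisFreeMonoid R X '' {u | e ≤ u.length})

variable {R} {e : ℕ} {x y : FreeAlgebra R X}

theorem mem_degreeAtLeast :
    x ∈ degreeAtLeast R e ↔ ∀ u, (basisFreeMonoid R X).repr x u ≠ 0 → e ≤ u.length := by
  rw [degreeAtLeast, Module.Basis.mem_span_image]
  exact ⟨fun h u hu => h (Finsupp.mem_support_iff.2 hu),
    fun h u hu => h u (Finsupp.mem_support_iff.1 hu)⟩

theorem degreeAtLeast_le_iff {M : Submodule R (FreeAlgebra R X)} :
    degreeAtLeast R e ≤ M ↔ ∀ u : FreeMonoid X, e ≤ u.length → basisFreeMonoid R X u ∈ M := by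
  simp [degreeAtLeast, Submodule.span_le, Set.subset_def]

theorem basisFreeMonoid_mem_degreeAtLeast (u : FreeMonoid X) :
    basisFreeMonoid R X u ∈ degreeAtLeast R u.length :=
  Submodule.subset_span ⟨u, le_refl u.length, rfl⟩

theorem degreeAtLeast_antitone : Antitone (degreeAtLeast R (X := X)) :=
  fun _ _ h => Submodule.span_mono (Set.image_mono fun _ hu => le_trans h hu)

@[simp]
theorem degreeAtLeast_zero : degreeAtLeast R 0 = (⊤ : Submodule R (FreeAlgebra R X)) := by
  simp [degreeAtLeast, Module.Basis.span_eq]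

theorem ι_mem_degreeAtLeast_one (x : X) : ι R x ∈ degreeAtLeast R 1 := by
  simpa using basisFreeMonoid_mem_degreeAtLeast (R := R) (FreeMonoid.of x)

theorem degreeAtLeast_mul_le (a b : ℕ) :
    degreeAtLeast (X := X) R a * degreeAtLeast R b ≤ degreeAtLeast R (a + b) := by
  rw [degreeAtLeast, degreeAtLeast, Submodule.span_mul_span, Submodule.span_le]
  rintro _ ⟨_, ⟨u, hu, rfl⟩, _, ⟨v, hv, rfl⟩, rfl⟩
  refine Submodule.subset_span ⟨u * v, ?_, basisFreeMonoid_mul R u v⟩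
  simp only [Set.mem_ofPred_eq, FreeMonoid.length_mul] at hu hv ⊢
  omega

theorem mul_mem_degreeAtLeast {a b : ℕ} (hx : x ∈ degreeAtLeast R a)
    (hy : y ∈ degreeAtLeast R b) : x * y ∈ degreeAtLeast R (a + b) :=
  degreeAtLeast_mul_le a b (Submodule.mul_mem_mul hx hy)

theorem span_range_ι_pow_le (e : ℕ) :
    Submodule.span R (Set.range (ι R : X → FreeAlgebra R X)) ^ e ≤ degreeAtLeast R e := by
  induction e with
  | zero => simp
  | succ e ih =>
    rw [pow_succ]
    refine le_trans (mul_le_mul' ih ?_) (degreeAtLeast_mul_le e 1)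
    exact Submodule.span_le.2 (Set.range_subset_iff.2 (ι_mem_degreeAtLeast_one (R := R)))

theorem higherDegree_le_degreeAtLeast_two {K : Type} [Field K] {n : ℕ} :
    higherDegree K n ≤ degreeAtLeast K 2 :=
  iSup_le fun e => (span_range_ι_pow_le e).trans (degreeAtLeast_antitone e.2)

theorem repr_eq_of_sub_mem_degreeAtLeast {u : FreeMonoid X}
    (h : x - y ∈ degreeAtLeast R (e + 1)) (hu : u.length ≤ e) :
    (basisFreeMonoid R X).repr x u = (basisFreeMonoid R X).repr y u := by
  by_contra hne
  have := mem_degreeAtLeast.1 h u (by simpa [sub_eq_zero] using hne)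
  omega

theorem mem_degreeAtLeast_succ (hx : x ∈ degreeAtLeast R e)
    (h : ∀ u : FreeMonoid X, u.length = e → (basisFreeMonoid R X).repr x u = 0) :
    x ∈ degreeAtLeast R (e + 1) := by
  rw [mem_degreeAtLeast] at hx ⊢
  exact fun u hu => lt_of_le_of_ne (hx u hu) fun he => hu (h u he.symm)

theorem eq_zero_of_forall_mem_degreeAtLeast (h : ∀ e, x ∈ degreeAtLeast R e) : x = 0 := by
  refine (basisFreeMonoid R X).repr.map_eq_zero_iff.1 (Finsupp.ext fun u => ?_)
  by_contra hu
  have := mem_degreeAtLeast.1 (h (u.length + 1)) u hu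
  omega

variable (R) in
noncomputable def homogeneousComponent (e : ℕ) (x : FreeAlgebra R X) : FreeAlgebra R X :=
  (basisFreeMonoid R X).repr.symm (((basisFreeMonoid R X).repr x).filter fun u => u.length = e)

theorem repr_homogeneousComponent (u : FreeMonoid X) :
    (basisFreeMonoid R X).repr (homogeneousComponent R e x) u =
      if u.length = e then (basisFreeMonoid R X).repr x u else 0 := by
  simp [homogeneousComponent, Finsupp.filter_apply]

theorem homogeneousComponent_mem_degreeAtLeast :
    homogeneousComponent R e x ∈ degreeAtLeast R e := by
  refine mem_degreeAtLeast.2 fun u hu => ?_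
  rw [repr_homogeneousComponent] at hu
  split_ifs at hu with h
  · exact h.ge
  · exact absurd rfl hu

theorem sub_homogeneousComponent_mem (hx : x ∈ degreeAtLeast R e) :
    x - homogeneousComponent R e x ∈ degreeAtLeast R (e + 1) := by
  refine mem_degreeAtLeast_succ (Submodule.sub_mem _ hx homogeneousComponent_mem_degreeAtLeast)
    fun u hu => ?_
  simp [repr_homogeneousComponent, hu]

variable {φ ψ : FreeAlgebra R X →ₐ[R] FreeAlgebra R X}

theorem apply_basisFreeMonoid_mem_degreeAtLeast (hφ : ∀ x, φ (ι R x) ∈ degreeAtLeast R 1)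
    (u : FreeMonoid X) : φ (basisFreeMonoid R X u) ∈ degreeAtLeast R u.length := by
  induction u using FreeMonoid.inductionOn' with
  | one => simp
  | of_mul x u ih =>
    rw [basisFreeMonoid_mul, basisFreeMonoid_of, map_mul, FreeMonoid.length_mul,
      FreeMonoid.length_of]
    exact mul_mem_degreeAtLeast (hφ x) ih

theorem sub_apply_basisFreeMonoid_mem_degreeAtLeast (hψ : ∀ x, ψ (ι R x) ∈ degreeAtLeast R 1)
    (hφψ : ∀ x, φ (ι R x) - ψ (ι R x) ∈ degreeAtLeast R 2) (u : FreeMonoid X) :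
    φ (basisFreeMonoid R X u) - ψ (basisFreeMonoid R X u) ∈ degreeAtLeast R (u.length + 1) := by
  have hφ x : φ (ι R x) ∈ degreeAtLeast R 1 := by
    simpa using add_mem (degreeAtLeast_antitone one_le_two (hφψ x)) (hψ x)
  induction u using FreeMonoid.inductionOn' with
  | one => simp
  | of_mul x u ih =>
    set b := basisFreeMonoid R X u
    have hsplit : φ (ι R x) * φ b - ψ (ι R x) * ψ b =
        (φ (ι R x) - ψ (ι R x)) * φ b + ψ (ι R x) * (φ b - ψ b) := by
      noncomm_ring
    rw [basisFreeMonoid_mul, basisFreeMonoid_of, map_mul, map_mul, hsplit,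
      FreeMonoid.length_mul, FreeMonoid.length_of]
    refine add_mem (degreeAtLeast_antitone (by omega) (mul_mem_degreeAtLeast (hφψ x)
      (apply_basisFreeMonoid_mem_degreeAtLeast hφ u))) ?_
    exact degreeAtLeast_antitone (by omega) (mul_mem_degreeAtLeast (hψ x) ih)

theorem sub_apply_mem_degreeAtLeast_succ (hψ : ∀ x, ψ (ι R x) ∈ degreeAtLeast R 1)
    (hφψ : ∀ x, φ (ι R x) - ψ (ι R x) ∈ degreeAtLeast R 2) (hy : y ∈ degreeAtLeast R e) :
    φ y - ψ y ∈ degreeAtLeast R (e + 1) :=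
  degreeAtLeast_le_iff
    (M := (degreeAtLeast R (e + 1)).comap (φ.toLinearMap - ψ.toLinearMap)).2
    (fun u hu => degreeAtLeast_antitone (by omega)
      (sub_apply_basisFreeMonoid_mem_degreeAtLeast hψ hφψ u)) hy

end DegreeFiltration

section DiagonalAction

variable {K : Type*} [Field K] {r : ℕ} {X : Type*} (k : X → Fin r → ℤ)

def wordWeight (u : FreeMonoid X) : Fin r → ℤ := (u.toList.map k).sum

@[simp]
theorem wordWeight_one : wordWeight k 1 = 0 := rfl

@[simp]
theorem wordWeight_of_mul (x : X) (u : FreeMonoid X) :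
    wordWeight k (FreeMonoid.of x * u) = k x + wordWeight k u := by
  simp [wordWeight]

theorem wordWeight_apply_le {j : Fin r} (hk : ∀ x, k x j ≤ -1) (u : FreeMonoid X) :
    wordWeight k u j ≤ -u.length := by
  induction u using FreeMonoid.inductionOn' with
  | one => simp
  | of_mul x u ih =>
    simp only [wordWeight_of_mul, Pi.add_apply, FreeMonoid.length_mul, FreeMonoid.length_of]
    have := hk x
    omega

def diagonalAction (t : Fin r → Kˣ) : FreeAlgebra K X →ₐ[K] FreeAlgebra K X :=
  lift K fun x => torusCharacter (k x) t • ι K x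

variable {k}

@[simp]
theorem diagonalAction_ι (t : Fin r → Kˣ) (x : X) :
    diagonalAction k t (ι K x) = torusCharacter (k x) t • ι K x :=
  lift_ι_apply _ _

theorem diagonalAction_basisFreeMonoid (t : Fin r → Kˣ) (u : FreeMonoid X) :
    diagonalAction k t (basisFreeMonoid K X u) =
      torusCharacter (wordWeight k u) t • basisFreeMonoid K X u := by
  induction u using FreeMonoid.inductionOn' with
  | one => simp [torusCharacter_zero]
  | of_mul x u ih =>
    rw [basisFreeMonoid_mul, map_mul, ih, basisFreeMonoid_of, diagonalAction_ι,
      smul_mul_smul_comm, wordWeight_of_mul, torusCharacter_add]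

theorem repr_diagonalAction (t : Fin r → Kˣ) (y : FreeAlgebra K X) (u : FreeMonoid X) :
    (basisFreeMonoid K X).repr (diagonalAction k t y) u =
      torusCharacter (wordWeight k u) t * (basisFreeMonoid K X).repr y u := by
  classical
  let coeffAt : FreeAlgebra K X →ₗ[K] K := Finsupp.lapply u ∘ₗ (basisFreeMonoid K X).repr
  suffices coeffAt ∘ₗ (diagonalAction k t).toLinearMap =
      torusCharacter (wordWeight k u) t • coeffAt from LinearMap.congr_fun this y
  refine (basisFreeMonoid K X).ext fun v => ?_
  by_cases h : v = u
  · subst h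
    simp [coeffAt, diagonalAction_basisFreeMonoid]
  · simp [coeffAt, diagonalAction_basisFreeMonoid, h]

end DiagonalAction

section Roots

variable {K : Type*} [Field K] {r : ℕ} {X : Type*}

def HasRoots (σ : (Fin r → Kˣ) →* (FreeAlgebra K X ≃ₐ[K] FreeAlgebra K X))
    (k : X → Fin r → ℤ) : Prop :=
  ∀ t x, σ t (ι K x) - torusCharacter (k x) t • ι K x ∈ degreeAtLeast K 2

variable {σ : (Fin r → Kˣ) →* (FreeAlgebra K X ≃ₐ[K] FreeAlgebra K X)}
  {k : X → Fin r → ℤ} {m : Fin r → ℤ} {e : ℕ} {v : FreeAlgebra K X}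

theorem apply_sub_diagonalAction_mem_degreeAtLeast (hσ : HasRoots σ k)
    {y : FreeAlgebra K X} (hy : y ∈ degreeAtLeast K e) (t : Fin r → Kˣ) :
    σ t y - diagonalAction k t y ∈ degreeAtLeast K (e + 1) :=
  sub_apply_mem_degreeAtLeast_succ (φ := (σ t).toAlgHom)
    (fun x => by simpa using Submodule.smul_mem _ _ (ι_mem_degreeAtLeast_one x))
    (fun x => by simpa using hσ t x) hy

/-- On the lowest-degree part `σ t` agrees with `diagonalAction k t`, which scales a word `u`
by the character of `wordWeight k u`. -/
theorem wordWeight_eq_of_repr_ne_zero [CharZero K]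
    (hσ : HasRoots σ k) (hv : IsWeightVector σ m v) (hve : v ∈ degreeAtLeast K e)
    {u : FreeMonoid X} (hu : u.length = e) (hvu : (basisFreeMonoid K X).repr v u ≠ 0) :
    wordWeight k u = m := by
  refine torusCharacter_injective (K := K) (MonoidHom.ext fun t => ?_)
  have h := repr_eq_of_sub_mem_degreeAtLeast
    (apply_sub_diagonalAction_mem_degreeAtLeast hσ hve t) hu.le
  rw [hv t, repr_diagonalAction, map_smul, Finsupp.smul_apply, smul_eq_mul] at h
  exact (mul_right_cancel₀ hvu h).symm

theorem eq_zero_of_isWeightVector_of_mem_degreeAtLeast [CharZero K]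
    (hσ : HasRoots σ k) {j : Fin r} (hk : ∀ x, k x j ≤ -1) (hv : IsWeightVector σ m v)
    (hve : v ∈ degreeAtLeast K e) (he : -m j < e) : v = 0 := by
  have hmem : ∀ d, v ∈ degreeAtLeast K (e + d) := by
    intro d
    induction d with
    | zero => exact hve
    | succ d ih =>
      refine mem_degreeAtLeast_succ (e := e + d) ih fun u hu => ?_
      by_contra hvu
      have := wordWeight_apply_le k hk u
      rw [wordWeight_eq_of_repr_ne_zero hσ hv ih hu hvu, hu] at this
      omega
  exact eq_zero_of_forall_mem_degreeAtLeast fun d =>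
    degreeAtLeast_antitone (Nat.le_add_left d e) (hmem d)

theorem diagonalAction_homogeneousComponent [CharZero K]
    (hσ : HasRoots σ k) (hv : IsWeightVector σ m v) (hve : v ∈ degreeAtLeast K e)
    (t : Fin r → Kˣ) :
    diagonalAction k t (homogeneousComponent K e v) =
      torusCharacter m t • homogeneousComponent K e v := by
  refine (basisFreeMonoid K X).repr.injective (Finsupp.ext fun u => ?_)
  rw [repr_diagonalAction, map_smul, Finsupp.smul_apply, smul_eq_mul, repr_homogeneousComponent]
  split_ifs with hu
  · by_cases hvu : (basisFreeMonoid K X).repr v u = 0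
    · simp [hvu]
    · rw [wordWeight_eq_of_repr_ne_zero hσ hv hve hu hvu]
  · simp

end Roots

section EigenGenerators

variable {K : Type*} [Field K] {r : ℕ} {X : Type*}
  {σ : (Fin r → Kˣ) →* (FreeAlgebra K X ≃ₐ[K] FreeAlgebra K X)} {k : X → Fin r → ℤ}
  {w : X → FreeAlgebra K X} {m : Fin r → ℤ} {e : ℕ} {v : FreeAlgebra K X}

theorem lift_sub_mem_degreeAtLeast (hw : ∀ x, w x - ι K x ∈ degreeAtLeast K 2)
    (hv : v ∈ degreeAtLeast K e) : lift K w v - v ∈ degreeAtLeast K (e + 1) :=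
  sub_apply_mem_degreeAtLeast_succ (ψ := AlgHom.id K _) (ι_mem_degreeAtLeast_one (R := K))
    (fun x => by simpa using hw x) hv

theorem lift_injective (hw : ∀ x, w x - ι K x ∈ degreeAtLeast K 2) :
    Function.Injective (lift K w) := by
  refine (injective_iff_map_eq_zero _).2 fun v hv =>
    eq_zero_of_forall_mem_degreeAtLeast fun e => ?_
  induction e with
  | zero => simp
  | succ e ih => simpa [hv] using lift_sub_mem_degreeAtLeast hw ih

theorem apply_lift (hw : ∀ x, IsWeightVector σ (k x) (w x)) (t : Fin r → Kˣ)
    (y : FreeAlgebra K X) : σ t (lift K w y) = lift K w (diagonalAction k t y) := by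
  suffices (σ t).toAlgHom.comp (lift K w) = (lift K w).comp (diagonalAction k t) from
    AlgHom.congr_fun this y
  ext x
  simp [hw x t]

theorem exists_mem_range_lift_sub_mem_degreeAtLeast [CharZero K]
    (hσ : HasRoots σ k) (hw : ∀ x, IsWeightVector σ (k x) (w x))
    (hw₂ : ∀ x, w x - ι K x ∈ degreeAtLeast K 2)
    (hv : IsWeightVector σ m v) (hve : v ∈ degreeAtLeast K e) :
    ∃ c ∈ (lift K w).range,
      IsWeightVector σ m (v - c) ∧ v - c ∈ degreeAtLeast K (e + 1) := by
  set y := homogeneousComponent K e v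
  refine ⟨lift K w y, AlgHom.mem_range_self _ y, fun t => ?_, ?_⟩
  · rw [map_sub, hv t, apply_lift hw, diagonalAction_homogeneousComponent hσ hv hve, map_smul,
      smul_sub]
  · have h := sub_mem (sub_homogeneousComponent_mem hve)
      (lift_sub_mem_degreeAtLeast hw₂ (homogeneousComponent_mem_degreeAtLeast (x := v)))
    rwa [sub_sub_sub_cancel_right] at h

theorem mem_range_lift_of_isWeightVector [CharZero K]
    (hσ : HasRoots σ k) (hw : ∀ x, IsWeightVector σ (k x) (w x))
    (hw₂ : ∀ x, w x - ι K x ∈ degreeAtLeast K 2)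
    {j : Fin r} (hk : ∀ x, k x j ≤ -1) (hv : IsWeightVector σ m v) :
    v ∈ (lift K w).range := by
  -- A nonzero weight vector of weight `m` has no word of length `> -m j`: induct on `N - e`.
  set N := (-m j).toNat + 1
  suffices ∀ d v, IsWeightVector σ m v → v ∈ degreeAtLeast K (N - d) →
      v ∈ (lift K w).range from this N v hv (by simp)
  intro d
  induction d with
  | zero =>
    intro v hv hvN
    rw [eq_zero_of_isWeightVector_of_mem_degreeAtLeast hσ hk hv hvN (by omega)]
    exact zero_mem _
  | succ d ih =>
    intro v hv hvN
    obtain ⟨c, hc, hvc, hvce⟩ := exists_mem_range_lift_sub_mem_degreeAtLeast hσ hw hw₂ hv hvN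
    simpa using add_mem (ih (v - c) hvc (degreeAtLeast_antitone (by omega) hvce)) hc

end EigenGenerators

end FreeAlgebra

theorem torusActionIsLinearizable_of_bijective {K : Type} [Field K] {n r : ℕ}
    {σ : (Fin r → Kˣ) →* (FreeAlgebra K (Fin n) ≃ₐ[K] FreeAlgebra K (Fin n))}
    {k : Fin n → Fin r → ℤ} (β : FreeAlgebra K (Fin n) →ₐ[K] FreeAlgebra K (Fin n))
    (hβ : Function.Bijective β) (hβι : ∀ i, IsWeightVector σ (k i) (β (ι K i))) :
    TorusActionIsLinearizable σ := by
  refine ⟨AlgEquiv.ofBijective β hβ, fun t i => ?_⟩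
  rw [AlgEquiv.ofBijective_apply, hβι i t, ← AlgEquiv.ofBijective_apply β hβ, ← map_smul,
    AlgEquiv.symm_apply_apply]
  exact Submodule.smul_mem _ _ (Submodule.subset_span ⟨i, rfl⟩)

theorem negative_root_torus_action_linearizable_general
    {K : Type} [Field K] [CharZero K] {n r : ℕ}
    (hr : 1 ≤ r)
    (σ : (Fin r → Kˣ) →* (FreeAlgebra K (Fin n) ≃ₐ[K] FreeAlgebra K (Fin n)))
    (hreg : TorusActionIsRegular σ)
    (k : Fin n → Fin r → ℤ)
    (hneg : ∀ (i : Fin n) (j : Fin r), k i j ≤ -1)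
    (hroots : ∀ (t : Fin r → Kˣ) (i : Fin n),
      σ t (ι K i) - ((∏ j : Fin r, (t j) ^ (k i j) : Kˣ) : K) • ι K i
        ∈ FreeAlgebra.higherDegree K n) :
    TorusActionIsLinearizable σ := by
  choose a ha using hreg
  have hσ : HasRoots σ k := fun t i => higherDegree_le_degreeAtLeast_two (hroots t i)
  have hw i : IsWeightVector σ (k i) (a i (k i)) :=
    isWeightVector_of_forall_apply_eq_laurent (ha i) _
  have hw₂ i : a i (k i) - ι K i ∈ degreeAtLeast K 2 :=
    sub_mem_of_forall_apply_eq_laurent _ (ha i) (hσ · i)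
  have hsurj : Function.Surjective (lift K fun i => a i (k i)) := by
    rw [← AlgHom.range_eq_top, eq_top_iff, ← adjoin_range_ι, Algebra.adjoin_le_iff]
    rintro _ ⟨i, rfl⟩
    rw [eq_sum_of_forall_apply_eq_laurent (ha i)]
    exact Subalgebra.sum_mem _ fun m _ => mem_range_lift_of_isWeightVector hσ hw hw₂
      (j := ⟨0, hr⟩) (fun i => hneg i _) (isWeightVector_of_forall_apply_eq_laurent (ha i) m)
  exact torusActionIsLinearizable_of_bijective _ ⟨lift_injective hw₂, hsurj⟩
    fun i => by simpa using hw i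

/-- Every regular torus action with negative roots on the free associative algebra over an
algebraically closed field of characteristic zero is linearizable. -/
theorem negative_root_torus_action_linearizable
    {K : Type} [Field K] [IsAlgClosed K] [CharZero K] {n r : ℕ}
    (hn : 1 ≤ n) (hr : 1 ≤ r)
    (σ : (Fin r → Kˣ) →* (FreeAlgebra K (Fin n) ≃ₐ[K] FreeAlgebra K (Fin n)))
    (hreg : TorusActionIsRegular σ)
    (k : Fin n → Fin r → ℤ)
    (hneg : ∀ (i : Fin n) (j : Fin r), k i j ≤ -1)
    (hroots : ∀ (t : Fin r → Kˣ) (i : Fin n),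
      σ t (ι K i) - ((∏ j : Fin r, (t j) ^ (k i j) : Kˣ) : K) • ι K i
        ∈ FreeAlgebra.higherDegree K n) :
    TorusActionIsLinearizable σ :=
  negative_root_torus_action_linearizable_general hr σ hreg k hneg hroots
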